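/- Let à be a hyper-dual matrix whose hyper-dual group inverse Ã^# exists and let b̃ be a hyper-dual vector. Then the hyper-dual linear system Ãx̃ = b̃ has a solution if and only if ÃÃ^#b̃ = b̃; moreover, in that case the general solution is x̃ = Ã^#b̃ + (I − ÃÃ^#)z̃ with z̃ an arbitrary hyper-dual vector. -/
import Mathlib

set_option synthInstance.maxHeartbeats 1000000
set_option maxHeartbeats 1000000

abbrev Mat (n : ℕ) := Matrix (Fin n) (Fin n) ℝ
abbrev DMat (n : ℕ) := DualNumber (Mat n)
abbrev HMat (n : ℕ) := DualNumber (DMat n)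
abbrev DVec (n : ℕ) := DualNumber (Fin n → ℝ)
abbrev HVec (n : ℕ) := DualNumber (DVec n)

/-- `g` is a group inverse of `a`. -/
def IsGroupInv {R : Type*} [Mul R] (a g : R) : Prop :=
  a * g * a = a ∧ g * a * g = g ∧ a * g = g * a

/-- A dual matrix acting on a dual vector. -/
def dmulVec {n : ℕ} (A : DMat n) (x : DVec n) : DVec n :=
  ⟨A.fst.mulVec x.fst, A.fst.mulVec x.snd + A.snd.mulVec x.fst⟩

/-- A hyper-dual matrix acting on a hyper-dual vector. -/
def hmulVec {n : ℕ} (A : HMat n) (x : HVec n) : HVec n :=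
  ⟨dmulVec A.fst x.fst, dmulVec A.fst x.snd + dmulVec A.snd x.fst⟩

@[simp] lemma fst_dmulVec {n : ℕ} (A : DMat n) (x : DVec n) :
    (dmulVec A x).fst = A.fst.mulVec x.fst := rfl

@[simp] lemma snd_dmulVec {n : ℕ} (A : DMat n) (x : DVec n) :
    (dmulVec A x).snd = A.fst.mulVec x.snd + A.snd.mulVec x.fst := rfl

@[simp] lemma fst_hmulVec {n : ℕ} (A : HMat n) (x : HVec n) :
    (hmulVec A x).fst = dmulVec A.fst x.fst := rfl

@[simp] lemma snd_hmulVec {n : ℕ} (A : HMat n) (x : HVec n) :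
    (hmulVec A x).snd = dmulVec A.fst x.snd + dmulVec A.snd x.fst := rfl

lemma dmulVec_comp {n : ℕ} (A B : DMat n) (x : DVec n) :
    dmulVec (A * B) x = dmulVec A (dmulVec B x) := by
  apply TrivSqZeroExt.ext <;>
    simp [TrivSqZeroExt.fst_mul, TrivSqZeroExt.snd_mul,
      Matrix.mulVec_add, Matrix.add_mulVec, Matrix.mulVec_mulVec] <;> abel

lemma dmulVec_add {n : ℕ} (A : DMat n) (x y : DVec n) :
    dmulVec A (x + y) = dmulVec A x + dmulVec A y := by
  apply TrivSqZeroExt.ext <;>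
    simp [Matrix.mulVec_add, TrivSqZeroExt.fst_add, TrivSqZeroExt.snd_add] <;> abel

lemma add_dmulVec {n : ℕ} (A B : DMat n) (x : DVec n) :
    dmulVec (A + B) x = dmulVec A x + dmulVec B x := by
  apply TrivSqZeroExt.ext <;>
    simp [Matrix.add_mulVec, TrivSqZeroExt.fst_add, TrivSqZeroExt.snd_add] <;> abel

lemma hmulVec_comp {n : ℕ} (A B : HMat n) (x : HVec n) :
    hmulVec (A * B) x = hmulVec A (hmulVec B x) := by
  apply TrivSqZeroExt.ext <;>
    simp [TrivSqZeroExt.fst_mul, TrivSqZeroExt.snd_mul, dmulVec_comp,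
      dmulVec_add, add_dmulVec] <;> abel

lemma hmulVec_add {n : ℕ} (A : HMat n) (x y : HVec n) :
    hmulVec A (x + y) = hmulVec A x + hmulVec A y := by
  apply TrivSqZeroExt.ext <;>
    simp [dmulVec_add, TrivSqZeroExt.fst_add, TrivSqZeroExt.snd_add] <;> abel

lemma hmulVec_sub {n : ℕ} (A : HMat n) (x y : HVec n) :
    hmulVec A (x - y) = hmulVec A x - hmulVec A y := by
  have h := hmulVec_add A (x - y) y
  simp at h
  rw [h]; abel

/-- Consistency of a hyper-dual linear system and its general solution via the HDGGI. -/
theorem hdggi_linear_system (n : ℕ) (At G : HMat n) (hG : IsGroupInv At G)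
    (b : HVec n) :
    ((∃ x : HVec n, hmulVec At x = b) ↔ hmulVec At (hmulVec G b) = b) ∧
      (hmulVec At (hmulVec G b) = b →
        ∀ x : HVec n, hmulVec At x = b ↔
          ∃ z : HVec n, x = hmulVec G b + (z - hmulVec (At * G) z)) := by
  obtain ⟨h1, h2, h3⟩ := hG
  constructor
  · constructor
    · rintro ⟨x, rfl⟩
      rw [← hmulVec_comp, ← hmulVec_comp, h1]
    · intro h; exact ⟨_, h⟩
  · intro h x
    constructor
    · intro hx
      refine ⟨x, ?_⟩
      have hAGx : hmulVec (At * G) x = hmulVec G b := by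
        rw [h3, hmulVec_comp, hx]
      rw [hAGx]; abel
    · rintro ⟨z, rfl⟩
      have hAt : At * (At * G) = At := by rw [h3, ← mul_assoc, h1]
      rw [hmulVec_add, hmulVec_sub, h, ← hmulVec_comp, hAt]
      abel
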